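/- Let E ⊂ ℝ^n be nonempty and bounded and let d(s) denote the lower s-box dimension profile of E. Then for all 0 < s ≤ t: d(t)/(1 + (1/s − 1/t)d(t)) ≤ d(s) ≤ s. -/

import Mathlib

open MeasureTheory Metric Classical Filter

/-- The kernel φ_r^s(x) = min{1, (r/|x|)^s}, with value 1 at x = 0. -/
noncomputable def phiKer (n : ℕ) (s r : ℝ) (x : EuclideanSpace ℝ (Fin n)) : ℝ :=
  if x = 0 then 1 else min 1 ((r / ‖x‖) ^ s)

/-- N_r(E): the minimal number of sets of diameter at most r needed to cover E. -/
noncomputable def coverNum {X : Type*} [PseudoMetricSpace X] (E : Set X) (r : ℝ) : ℕ :=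
  sInf {k | ∃ S : Finset (Set X), S.card = k ∧ (∀ A ∈ S, Metric.diam A ≤ r) ∧ E ⊆ ⋃₀ ↑S}

/-- The capacity C_r^s(E): reciprocal of the infimal energy over probability
measures supported on the closure of E. -/
noncomputable def capacity (n : ℕ) (s r : ℝ) (E : Set (EuclideanSpace ℝ (Fin n))) : ℝ :=
  (sInf {I : ℝ | ∃ μ : Measure (EuclideanSpace ℝ (Fin n)),
    IsProbabilityMeasure μ ∧ μ (closure E)ᶜ = 0 ∧
      I = ∫ x, ∫ y, phiKer n s r (x - y) ∂μ ∂μ})⁻¹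

/-- The lower s-box dimension profile of E. -/
noncomputable def lowerProfile (n : ℕ) (s : ℝ) (E : Set (EuclideanSpace ℝ (Fin n))) : ℝ :=
  liminf (fun r => Real.log (capacity n s r E) / (-Real.log r)) (nhdsWithin 0 (Set.Ioi 0))

/-- The upper s-box dimension profile of E. -/
noncomputable def upperProfile (n : ℕ) (s : ℝ) (E : Set (EuclideanSpace ℝ (Fin n))) : ℝ :=
  limsup (fun r => Real.log (capacity n s r E) / (-Real.log r)) (nhdsWithin 0 (Set.Ioi 0))

/-- The lower box dimension of a bounded set, via covering numbers. -/
noncomputable def lowerBoxDim {X : Type*} [PseudoMetricSpace X] (E : Set X) : ℝ :=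
  liminf (fun r => Real.log (coverNum E r) / (-Real.log r)) (nhdsWithin 0 (Set.Ioi 0))

/-- The upper box dimension of a bounded set, via covering numbers. -/
noncomputable def upperBoxDim {X : Type*} [PseudoMetricSpace X] (E : Set X) : ℝ :=
  limsup (fun r => Real.log (coverNum E r) / (-Real.log r)) (nhdsWithin 0 (Set.Ioi 0))

/-!
Write `ε_s(r) = 1 / C_r^s(E)` for the least `φ_r^s`-energy of a probability measure on the
closure of `E`. Since `E` is bounded, `ε_s(r) ≥ c r^s`, whence `d(s) ≤ s`.

For `r ≤ R` and `s ≤ t` the kernels satisfy `φ_r^s ≤ φ_R^t + (r/R)^s (φ_R^t)^(s/t)`; Jensen's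
inequality for the concave `x ↦ x^(s/t)`, applied to the inner and then to the outer integral,
gives `ε_s(r) ≤ ε_t(R) + (r/R)^s ε_t(R)^(s/t)`.
If `e < d(t)`, then `ε_t(R) ≤ R^e` for small `R`, and with `R = r^θ`, `θ = 1/(1 + (1/s - 1/t) e)`,
both terms equal `r^(θe)`. Hence `d(s) ≥ θ e`, and letting `e ↑ d(t)` gives the lower bound.
-/

open Real Set Topology

section Jensen

variable {α : Type*} [MeasurableSpace α] {μ : Measure α}

lemma integrable_of_nonneg_of_le_one [IsFiniteMeasure μ] {f : α → ℝ}
    (hf : AEStronglyMeasurable f μ) (h0 : ∀ x, 0 ≤ f x) (h1 : ∀ x, f x ≤ 1) : Integrable f μ :=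
  .of_bound hf 1 (ae_of_all _ fun x => by rw [norm_of_nonneg (h0 x)]; exact h1 x)

lemma integral_rpow_le_rpow_integral [IsProbabilityMeasure μ] {f : α → ℝ} {p : ℝ}
    (hf : AEStronglyMeasurable f μ) (h0 : ∀ x, 0 ≤ f x) (h1 : ∀ x, f x ≤ 1)
    (hp : 0 ≤ p) (hp1 : p ≤ 1) :
    ∫ x, f x ^ p ∂μ ≤ (∫ x, f x ∂μ) ^ p :=
  (concaveOn_rpow hp hp1).le_map_integral (continuous_rpow_const hp).continuousOn isClosed_Ici
    (ae_of_all _ h0) (integrable_of_nonneg_of_le_one hf h0 h1)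
    (integrable_of_nonneg_of_le_one (hf.aemeasurable.pow_const p).aestronglyMeasurable
      (fun x => rpow_nonneg (h0 x) p) (fun x => rpow_le_one (h0 x) (h1 x) hp))

lemma integral_le_add_mul_rpow_integral [IsProbabilityMeasure μ] {f g : α → ℝ} {a p : ℝ}
    (hf : Integrable f μ) (hg : AEStronglyMeasurable g μ) (hg0 : ∀ x, 0 ≤ g x)
    (hg1 : ∀ x, g x ≤ 1) (ha : 0 ≤ a) (hp : 0 ≤ p) (hp1 : p ≤ 1)
    (hfg : ∀ x, f x ≤ g x + a * g x ^ p) :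
    ∫ x, f x ∂μ ≤ ∫ x, g x ∂μ + a * (∫ x, g x ∂μ) ^ p := by
  have hgi := integrable_of_nonneg_of_le_one hg hg0 hg1
  have hgpi : Integrable (fun x => g x ^ p) μ :=
    integrable_of_nonneg_of_le_one (hg.aemeasurable.pow_const p).aestronglyMeasurable
      (fun x => rpow_nonneg (hg0 x) p) (fun x => rpow_le_one (hg0 x) (hg1 x) hp)
  calc ∫ x, f x ∂μ ≤ ∫ x, (g x + a * g x ^ p) ∂μ :=
        integral_mono hf (hgi.add (hgpi.const_mul a)) hfg
    _ = ∫ x, g x ∂μ + a * ∫ x, g x ^ p ∂μ := by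
        rw [integral_add hgi (hgpi.const_mul a), integral_const_mul]
    _ ≤ ∫ x, g x ∂μ + a * (∫ x, g x ∂μ) ^ p := by
      gcongr
      exact integral_rpow_le_rpow_integral hg hg0 hg1 hp hp1

end Jensen

section Kernel

variable {n : ℕ} {s t r R : ℝ}

lemma phiKer_nonneg (hr : 0 ≤ r) (u : EuclideanSpace ℝ (Fin n)) : 0 ≤ phiKer n s r u := by
  unfold phiKer
  split_ifs
  exacts [zero_le_one, le_min zero_le_one (rpow_nonneg (div_nonneg hr (norm_nonneg u)) s)]

lemma phiKer_le_one (u : EuclideanSpace ℝ (Fin n)) : phiKer n s r u ≤ 1 := by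
  unfold phiKer
  split_ifs
  exacts [le_rfl, min_le_left _ _]

lemma measurable_phiKer : Measurable (phiKer n s r) :=
  Measurable.ite (measurableSet_singleton 0) measurable_const
    (measurable_const.min ((measurable_const.div measurable_norm).pow_const s))

lemma phiKer_eq_one_of_norm_le (ht : 0 ≤ t) {u : EuclideanSpace ℝ (Fin n)} (hu : ‖u‖ ≤ R) :
    phiKer n t R u = 1 := by
  unfold phiKer
  split_ifs with h0
  · rfl
  · exact min_eq_left (one_le_rpow ((one_le_div (norm_pos_iff.mpr h0)).mpr hu) ht)

lemma phiKer_eq_rpow_of_lt_norm (hR : 0 ≤ R) (ht : 0 ≤ t) {u : EuclideanSpace ℝ (Fin n)}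
    (hu : R < ‖u‖) : phiKer n t R u = (R / ‖u‖) ^ t := by
  have hu0 : u ≠ 0 := norm_pos_iff.mp (hR.trans_lt hu)
  rw [phiKer, if_neg hu0, min_eq_right]
  exact rpow_le_one (div_nonneg hR (norm_nonneg u)) (div_le_one_of_le₀ hu.le (norm_nonneg u)) ht

lemma phiKer_le_rpow {u : EuclideanSpace ℝ (Fin n)} (hu : u ≠ 0) :
    phiKer n s r u ≤ (r / ‖u‖) ^ s := by
  rw [phiKer, if_neg hu]
  exact min_le_right _ _

lemma rpow_div_le_phiKer {D : ℝ} (hs : 0 ≤ s) (hr : 0 ≤ r) (hrD : r ≤ D)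
    {u : EuclideanSpace ℝ (Fin n)} (hu : ‖u‖ ≤ D) : (r / D) ^ s ≤ phiKer n s r u := by
  have hD := hr.trans hrD
  have hrD1 : (r / D) ^ s ≤ 1 := rpow_le_one (div_nonneg hr hD) (div_le_one_of_le₀ hrD hD) hs
  unfold phiKer
  split_ifs with h0
  · exact hrD1
  · exact le_min hrD1 (rpow_le_rpow (div_nonneg hr hD)
      (div_le_div_of_nonneg_left hr (norm_pos_iff.mpr h0) hu) hs)

lemma phiKer_le_add_mul_rpow (hs : 0 < s) (hst : s ≤ t) (hr : 0 < r) (hrR : r ≤ R)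
    (u : EuclideanSpace ℝ (Fin n)) :
    phiKer n s r u ≤ phiKer n t R u + (r / R) ^ s * phiKer n t R u ^ (s / t) := by
  have ht := hs.trans_le hst
  have hR := hr.trans_le hrR
  rcases le_or_gt ‖u‖ R with hu | hu
  · rw [phiKer_eq_one_of_norm_le ht.le hu, one_rpow, mul_one]
    linarith [phiKer_le_one (s := s) (r := r) u, rpow_nonneg (div_nonneg hr.le hR.le) s]
  · have hu0 : 0 < ‖u‖ := hR.trans hu
    rw [phiKer_eq_rpow_of_lt_norm hR.le ht.le hu]
    calc phiKer n s r u ≤ (r / ‖u‖) ^ s := phiKer_le_rpow (norm_pos_iff.mp hu0)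
      _ = (r / R) ^ s * ((R / ‖u‖) ^ t) ^ (s / t) := by
        rw [← rpow_mul (by positivity), mul_div_cancel₀ _ ht.ne', ← mul_rpow (by positivity)
          (by positivity), div_mul_div_cancel₀ hR.ne']
      _ ≤ (R / ‖u‖) ^ t + (r / R) ^ s * ((R / ‖u‖) ^ t) ^ (s / t) :=
        le_add_of_nonneg_left (by positivity)

end Kernel

section Energy

variable {n : ℕ} {s t r R : ℝ} (μ : Measure (EuclideanSpace ℝ (Fin n)))

noncomputable def potential (n : ℕ) (s r : ℝ) (μ : Measure (EuclideanSpace ℝ (Fin n)))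
    (x : EuclideanSpace ℝ (Fin n)) : ℝ :=
  ∫ y, phiKer n s r (x - y) ∂μ

noncomputable def energy (n : ℕ) (s r : ℝ) (μ : Measure (EuclideanSpace ℝ (Fin n))) : ℝ :=
  ∫ x, potential n s r μ x ∂μ

lemma measurable_phiKer_sub (x : EuclideanSpace ℝ (Fin n)) :
    Measurable fun y => phiKer n s r (x - y) :=
  measurable_phiKer.comp (measurable_const.sub measurable_id)

lemma potential_nonneg (hr : 0 ≤ r) (x : EuclideanSpace ℝ (Fin n)) :
    0 ≤ potential n s r μ x :=
  integral_nonneg fun _ => phiKer_nonneg hr _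

lemma energy_nonneg (hr : 0 ≤ r) : 0 ≤ energy n s r μ :=
  integral_nonneg (potential_nonneg μ hr)

variable [IsProbabilityMeasure μ]

lemma stronglyMeasurable_potential : StronglyMeasurable (potential n s r μ) :=
  (measurable_phiKer.comp (measurable_fst.sub measurable_snd)).stronglyMeasurable
    |>.integral_prod_right'

lemma integrable_phiKer_sub (hr : 0 ≤ r) (x : EuclideanSpace ℝ (Fin n)) :
    Integrable (fun y => phiKer n s r (x - y)) μ :=
  integrable_of_nonneg_of_le_one (measurable_phiKer_sub x).aestronglyMeasurable
    (fun _ => phiKer_nonneg hr _) (fun _ => phiKer_le_one _)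

lemma potential_le_one (hr : 0 ≤ r) (x : EuclideanSpace ℝ (Fin n)) :
    potential n s r μ x ≤ 1 := by
  simpa [potential] using integral_mono (integrable_phiKer_sub μ hr x) (integrable_const 1)
    fun _ => phiKer_le_one _

lemma integrable_potential (hr : 0 ≤ r) : Integrable (potential n s r μ) μ :=
  integrable_of_nonneg_of_le_one (stronglyMeasurable_potential μ).aestronglyMeasurable
    (potential_nonneg μ hr) (potential_le_one μ hr)

lemma energy_le_one (hr : 0 ≤ r) : energy n s r μ ≤ 1 := by
  simpa [energy] using integral_mono (integrable_potential μ hr) (integrable_const 1)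
    (potential_le_one μ hr)

lemma rpow_div_le_energy {E : Set (EuclideanSpace ℝ (Fin n))} (hE : Bornology.IsBounded E)
    (hμ : μ (closure E)ᶜ = 0) {D : ℝ} (hs : 0 ≤ s) (hr : 0 ≤ r) (hrD : r ≤ D)
    (hD : diam (closure E) ≤ D) : (r / D) ^ s ≤ energy n s r μ := by
  have hE' : ∀ᵐ x ∂μ, x ∈ closure E := mem_ae_iff.mpr hμ
  have hpot : ∀ᵐ x ∂μ, (r / D) ^ s ≤ potential n s r μ x := by
    filter_upwards [hE'] with x hx
    simpa [potential] using integral_mono_ae (integrable_const _) (integrable_phiKer_sub μ hr x)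
      (hE'.mono fun y hy => rpow_div_le_phiKer hs hr hrD
        ((dist_eq_norm x y ▸ dist_le_diam_of_mem hE.closure hx hy).trans hD))
  simpa [energy] using integral_mono_ae (integrable_const _) (integrable_potential μ hr) hpot

lemma energy_le_add_mul_rpow (hs : 0 < s) (hst : s ≤ t) (hr : 0 < r) (hrR : r ≤ R) :
    energy n s r μ ≤ energy n t R μ + (r / R) ^ s * energy n t R μ ^ (s / t) := by
  have ht := hs.trans_le hst
  have hR := hr.trans_le hrR
  have hp : 0 ≤ s / t := by positivity
  have hp1 : s / t ≤ 1 := div_le_one_of_le₀ hst ht.le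
  refine integral_le_add_mul_rpow_integral (integrable_potential μ hr.le)
    (stronglyMeasurable_potential μ).aestronglyMeasurable (potential_nonneg μ hR.le)
    (potential_le_one μ hR.le) (by positivity) hp hp1 fun x => ?_
  exact integral_le_add_mul_rpow_integral (integrable_phiKer_sub μ hr.le x)
    (measurable_phiKer_sub x).aestronglyMeasurable (fun _ => phiKer_nonneg hR.le _)
    (fun _ => phiKer_le_one _) (by positivity) hp hp1
    fun y => phiKer_le_add_mul_rpow hs hst hr hrR _

end Energy

section InfEnergy

variable {n : ℕ} {s t r R : ℝ} {E : Set (EuclideanSpace ℝ (Fin n))}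

def energySet (n : ℕ) (s r : ℝ) (E : Set (EuclideanSpace ℝ (Fin n))) : Set ℝ :=
  {I | ∃ μ : Measure (EuclideanSpace ℝ (Fin n)),
    IsProbabilityMeasure μ ∧ μ (closure E)ᶜ = 0 ∧ I = energy n s r μ}

noncomputable def infEnergy (n : ℕ) (s r : ℝ) (E : Set (EuclideanSpace ℝ (Fin n))) : ℝ :=
  sInf (energySet n s r E)

lemma capacity_eq_inv_infEnergy : capacity n s r E = (infEnergy n s r E)⁻¹ := rfl

lemma energySet_nonempty (hne : E.Nonempty) : (energySet n s r E).Nonempty := by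
  obtain ⟨x, hx⟩ := hne
  refine ⟨_, Measure.dirac x, inferInstance, ?_, rfl⟩
  rw [Measure.dirac_apply' _ isClosed_closure.measurableSet.compl]
  exact indicator_of_notMem (not_not.mpr (subset_closure hx)) _

lemma bddBelow_energySet (hr : 0 ≤ r) : BddBelow (energySet n s r E) :=
  ⟨0, by rintro _ ⟨μ, -, -, rfl⟩; exact energy_nonneg μ hr⟩

lemma infEnergy_nonneg (hr : 0 ≤ r) : 0 ≤ infEnergy n s r E :=
  Real.sInf_nonneg (by rintro _ ⟨μ, -, -, rfl⟩; exact energy_nonneg μ hr)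

lemma infEnergy_le_one (hr : 0 ≤ r) (hne : E.Nonempty) : infEnergy n s r E ≤ 1 := by
  obtain ⟨_, μ, hμ, hμE, rfl⟩ := energySet_nonempty (n := n) (s := s) (r := r) hne
  exact csInf_le_of_le (bddBelow_energySet hr) ⟨μ, hμ, hμE, rfl⟩ (energy_le_one μ hr)

lemma exists_mul_rpow_le_infEnergy (hs : 0 ≤ s) (hne : E.Nonempty) (hE : Bornology.IsBounded E) :
    ∃ c > 0, ∀ r, 0 < r → r ≤ 1 → c * r ^ s ≤ infEnergy n s r E := by
  set D := max (diam (closure E)) 1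
  have hD : 0 < D := zero_lt_one.trans_le (le_max_right _ _)
  refine ⟨(D ^ s)⁻¹, by positivity, fun r hr hr1 => ?_⟩
  rw [inv_mul_eq_div, ← div_rpow hr.le hD.le]
  refine le_csInf (energySet_nonempty hne) ?_
  rintro _ ⟨μ, hμ, hμE, rfl⟩
  exact rpow_div_le_energy μ hE hμE hs hr.le (hr1.trans (le_max_right _ _)) (le_max_left _ _)

lemma infEnergy_le_add_mul_rpow (hs : 0 < s) (hst : s ≤ t) (hr : 0 < r) (hrR : r ≤ R)
    (hne : E.Nonempty) :
    infEnergy n s r E ≤ infEnergy n t R E + (r / R) ^ s * infEnergy n t R E ^ (s / t) := by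
  have ht := hs.trans_le hst
  have hR := hr.trans_le hrR
  set F : ℝ → ℝ := fun x => x + (r / R) ^ s * x ^ (s / t)
  have hF : Continuous F :=
    continuous_id.add (continuous_const.mul (continuous_rpow_const (by positivity)))
  have hFmono : MonotoneOn F (energySet n t R E) := by
    rintro _ ⟨μ, -, -, rfl⟩ _ ⟨ν, -, -, rfl⟩ h
    have := energy_nonneg μ hR.le (s := t)
    dsimp only [F]
    gcongr
  change infEnergy n s r E ≤ F (sInf (energySet n t R E))
  rw [hFmono.map_csInf_of_continuousWithinAt hF.continuousWithinAt (energySet_nonempty hne)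
    (bddBelow_energySet hR.le)]
  refine le_csInf ((energySet_nonempty hne).image F) ?_
  rintro _ ⟨_, ⟨μ, hμ, hμE, rfl⟩, rfl⟩
  exact csInf_le_of_le (bddBelow_energySet hr.le) ⟨μ, hμ, hμE, rfl⟩
    (energy_le_add_mul_rpow μ hs hst hr hrR)

end InfEnergy

section LogRatio

lemma sub_log_div_le_log_inv_div_iff {ε K r a : ℝ} (hε : 0 < ε) (hK : 0 < K) (hr0 : 0 < r)
    (hr1 : r < 1) : a - log K / (-log r) ≤ log ε⁻¹ / (-log r) ↔ ε ≤ K * r ^ a := by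
  have hL : 0 < -log r := neg_pos.mpr (log_neg hr0 hr1)
  rw [sub_div' hL.ne', div_le_div_iff_of_pos_right hL, ← log_le_log_iff hε (by positivity),
    log_mul hK.ne' (rpow_pos_of_pos hr0 a).ne', log_rpow hr0, log_inv]
  constructor <;> intro h <;> linarith

lemma log_inv_div_le_sub_log_div_iff {ε K r a : ℝ} (hε : 0 < ε) (hK : 0 < K) (hr0 : 0 < r)
    (hr1 : r < 1) : log ε⁻¹ / (-log r) ≤ a - log K / (-log r) ↔ K * r ^ a ≤ ε := by
  have hL : 0 < -log r := neg_pos.mpr (log_neg hr0 hr1)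
  rw [sub_div' hL.ne', div_le_div_iff_of_pos_right hL, ← log_le_log_iff (by positivity) hε,
    log_mul hK.ne' (rpow_pos_of_pos hr0 a).ne', log_rpow hr0, log_inv]
  constructor <;> intro h <;> linarith

lemma tendsto_sub_log_div_neg_log (a K : ℝ) :
    Tendsto (fun r => a - log K / (-log r)) (𝓝[>] 0) (𝓝 a) := by
  have h : Tendsto (fun r => -log r) (𝓝[>] 0) atTop :=
    tendsto_neg_atBot_atTop.comp tendsto_log_nhdsGT_zero
  simpa [div_eq_mul_inv] using tendsto_const_nhds.sub (h.inv_tendsto_atTop.const_mul (log K))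

lemma tendsto_rpow_nhdsGT_zero {θ : ℝ} (hθ : 0 < θ) :
    Tendsto (fun r : ℝ => r ^ θ) (𝓝[>] 0) (𝓝[>] 0) :=
  tendsto_nhdsWithin_of_tendsto_nhds_of_eventually_within _
    (by simpa [zero_rpow hθ.ne'] using
      ((continuous_rpow_const hθ.le).tendsto 0).mono_left nhdsWithin_le_nhds)
    (eventually_nhdsWithin_of_forall fun r hr => rpow_pos_of_pos hr θ)

variable {α : Type*} {l : Filter α} [l.NeBot] {f g : α → ℝ} {a : ℝ}

lemma le_liminf_of_tendsto (hg : Tendsto g l (𝓝 a)) (hgf : g ≤ᶠ[l] f)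
    (hf : IsBoundedUnder (· ≤ ·) l f) : a ≤ liminf f l :=
  hg.liminf_eq ▸ liminf_le_liminf hgf hg.isBoundedUnder_ge hf.isCoboundedUnder_ge

lemma liminf_le_of_tendsto (hf : IsBoundedUnder (· ≥ ·) l f) (hfg : f ≤ᶠ[l] g)
    (hg : Tendsto g l (𝓝 a)) : liminf f l ≤ a :=
  hg.liminf_eq ▸ liminf_le_liminf hfg hf hg.isBoundedUnder_le.isCoboundedUnder_ge

end LogRatio

section Profile

variable {n : ℕ} {s t : ℝ} {E : Set (EuclideanSpace ℝ (Fin n))}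

noncomputable def logCapacityRatio (n : ℕ) (s : ℝ) (E : Set (EuclideanSpace ℝ (Fin n)))
    (r : ℝ) : ℝ :=
  log (capacity n s r E) / (-log r)

lemma infEnergy_pos (hs : 0 ≤ s) (hne : E.Nonempty) (hE : Bornology.IsBounded E) {r : ℝ}
    (hr0 : 0 < r) (hr1 : r ≤ 1) : 0 < infEnergy n s r E := by
  obtain ⟨c, hc, h⟩ := exists_mul_rpow_le_infEnergy hs hne hE
  exact (mul_pos hc (rpow_pos_of_pos hr0 s)).trans_le (h r hr0 hr1)

lemma eventually_logCapacityRatio_nonneg (hne : E.Nonempty) :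
    ∀ᶠ r in 𝓝[>] 0, 0 ≤ logCapacityRatio n s E r := by
  filter_upwards [Ioo_mem_nhdsGT zero_lt_one] with r hr
  refine div_nonneg ?_ (neg_nonneg.mpr (log_nonpos hr.1.le hr.2.le))
  rw [capacity_eq_inv_infEnergy, log_inv]
  exact neg_nonneg.mpr (log_nonpos (infEnergy_nonneg hr.1.le) (infEnergy_le_one hr.1.le hne))

lemma exists_eventually_logCapacityRatio_le (hs : 0 ≤ s) (hne : E.Nonempty)
    (hE : Bornology.IsBounded E) :
    ∃ c > 0, ∀ᶠ r in 𝓝[>] 0, logCapacityRatio n s E r ≤ s - log c / (-log r) := by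
  obtain ⟨c, hc, h⟩ := exists_mul_rpow_le_infEnergy hs hne hE
  refine ⟨c, hc, ?_⟩
  filter_upwards [Ioo_mem_nhdsGT zero_lt_one] with r hr
  exact (log_inv_div_le_sub_log_div_iff (infEnergy_pos hs hne hE hr.1 hr.2.le) hc hr.1
    hr.2).mpr (h r hr.1 hr.2.le)

lemma isBoundedUnder_ge_logCapacityRatio (hne : E.Nonempty) :
    IsBoundedUnder (· ≥ ·) (𝓝[>] 0) (logCapacityRatio n s E) :=
  ⟨0, eventually_logCapacityRatio_nonneg hne⟩

lemma isBoundedUnder_le_logCapacityRatio (hs : 0 ≤ s) (hne : E.Nonempty)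
    (hE : Bornology.IsBounded E) : IsBoundedUnder (· ≤ ·) (𝓝[>] 0) (logCapacityRatio n s E) := by
  obtain ⟨c, -, h⟩ := exists_eventually_logCapacityRatio_le hs hne hE
  exact (tendsto_sub_log_div_neg_log s c).isBoundedUnder_le.mono_le h

lemma lowerProfile_nonneg (hs : 0 ≤ s) (hne : E.Nonempty) (hE : Bornology.IsBounded E) :
    0 ≤ lowerProfile n s E :=
  le_liminf_of_tendsto tendsto_const_nhds (eventually_logCapacityRatio_nonneg hne)
    (isBoundedUnder_le_logCapacityRatio hs hne hE)

lemma lowerProfile_le (hs : 0 ≤ s) (hne : E.Nonempty) (hE : Bornology.IsBounded E) :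
    lowerProfile n s E ≤ s := by
  obtain ⟨c, -, h⟩ := exists_eventually_logCapacityRatio_le hs hne hE
  exact liminf_le_of_tendsto (isBoundedUnder_ge_logCapacityRatio hne) h
    (tendsto_sub_log_div_neg_log s c)

lemma eventually_infEnergy_le_rpow (hne : E.Nonempty) {e : ℝ} (he : e < lowerProfile n t E) :
    ∀ᶠ R in 𝓝[>] 0, infEnergy n t R E ≤ R ^ e := by
  filter_upwards [eventually_lt_of_lt_liminf he (isBoundedUnder_ge_logCapacityRatio hne),
    Ioo_mem_nhdsGT zero_lt_one] with R hR hR1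
  rcases (infEnergy_nonneg hR1.1.le (s := t) (E := E)).eq_or_lt with h0 | hpos
  · rw [← h0]
    exact (rpow_pos_of_pos hR1.1 e).le
  · simpa only [one_mul] using (sub_log_div_le_log_inv_div_iff hpos one_pos hR1.1 hR1.2).mp
      (by rw [log_one, zero_div, sub_zero]; exact hR.le)

lemma infEnergy_le_two_mul_rpow (hs : 0 < s) (hst : s ≤ t) (hne : E.Nonempty) {e θ r : ℝ}
    (he : 0 ≤ e) (hθ : θ * (1 + (1 / s - 1 / t) * e) = 1) (hr0 : 0 < r) (hr1 : r ≤ 1)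
    (hR : infEnergy n t (r ^ θ) E ≤ r ^ (θ * e)) : infEnergy n s r E ≤ 2 * r ^ (θ * e) := by
  have ht := hs.trans_le hst
  have hc : 0 ≤ 1 / s - 1 / t := sub_nonneg.mpr (one_div_le_one_div_of_le hs hst)
  have hX : 1 ≤ 1 + (1 / s - 1 / t) * e := le_add_of_nonneg_right (mul_nonneg hc he)
  have hθ' : θ = (1 + (1 / s - 1 / t) * e)⁻¹ := eq_inv_of_mul_eq_one_left hθ
  have hθ1 : θ ≤ 1 := hθ' ▸ inv_le_one_of_one_le₀ hX
  have hrR : r ≤ r ^ θ := by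
    simpa using rpow_le_rpow_of_exponent_ge hr0 hr1 hθ1
  have hexp : (1 - θ) * s + θ * e * (s / t) = θ * e := by
    have h1 : 1 - θ = θ * ((1 / s - 1 / t) * e) := by linear_combination (-1 : ℝ) * hθ
    rw [h1]
    field_simp
    ring
  calc infEnergy n s r E
      ≤ infEnergy n t (r ^ θ) E + (r / r ^ θ) ^ s * infEnergy n t (r ^ θ) E ^ (s / t) :=
        infEnergy_le_add_mul_rpow hs hst hr0 hrR hne
    _ ≤ r ^ (θ * e) + (r / r ^ θ) ^ s * (r ^ (θ * e)) ^ (s / t) := by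
        gcongr
        exact infEnergy_nonneg (hr0.le.trans hrR)
    _ = r ^ (θ * e) + r ^ ((1 - θ) * s + θ * e * (s / t)) := by
        rw [show r / r ^ θ = r ^ (1 - θ) by rw [rpow_sub hr0, rpow_one], ← rpow_mul hr0.le,
          ← rpow_mul hr0.le, ← rpow_add hr0]
    _ = 2 * r ^ (θ * e) := by rw [hexp]; ring

lemma div_le_lowerProfile (hs : 0 < s) (hst : s ≤ t) (hne : E.Nonempty)
    (hE : Bornology.IsBounded E) {e : ℝ} (he0 : 0 ≤ e) (he : e < lowerProfile n t E) :
    e / (1 + (1 / s - 1 / t) * e) ≤ lowerProfile n s E := by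
  have hc : 0 ≤ 1 / s - 1 / t := sub_nonneg.mpr (one_div_le_one_div_of_le hs hst)
  set θ := (1 + (1 / s - 1 / t) * e)⁻¹
  have hX : 0 < 1 + (1 / s - 1 / t) * e := by positivity
  have hθ : θ * (1 + (1 / s - 1 / t) * e) = 1 := inv_mul_cancel₀ hX.ne'
  have hsmall : ∀ᶠ r in 𝓝[>] 0, infEnergy n t (r ^ θ) E ≤ r ^ (θ * e) := by
    filter_upwards [(tendsto_rpow_nhdsGT_zero (inv_pos.mpr hX)).eventually
      (eventually_infEnergy_le_rpow hne he), self_mem_nhdsWithin] with r h hr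
    rwa [← rpow_mul (le_of_lt hr)] at h
  rw [div_eq_inv_mul]
  refine le_liminf_of_tendsto (tendsto_sub_log_div_neg_log (θ * e) 2) ?_
    (isBoundedUnder_le_logCapacityRatio hs.le hne hE)
  filter_upwards [hsmall, Ioo_mem_nhdsGT zero_lt_one] with r hR hr
  exact (sub_log_div_le_log_inv_div_iff (infEnergy_pos hs.le hne hE hr.1 hr.2.le) two_pos hr.1
    hr.2).mpr (infEnergy_le_two_mul_rpow hs hst hne he0 hθ hr.1 hr.2.le hR)

end Profile

theorem stmt_17_general (n : ℕ)
    (E : Set (EuclideanSpace ℝ (Fin n))) (hne : E.Nonempty) (hE : Bornology.IsBounded E)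
    (s t : ℝ) (hs : 0 < s) (hst : s ≤ t) :
    lowerProfile n t E / (1 + (1 / s - 1 / t) * lowerProfile n t E) ≤ lowerProfile n s E ∧
      lowerProfile n s E ≤ s := by
  refine ⟨?_, lowerProfile_le hs.le hne hE⟩
  set d := lowerProfile n t E
  have hd0 : 0 ≤ d := lowerProfile_nonneg (hs.trans_le hst).le hne hE
  rcases hd0.eq_or_lt with hd | hd
  · rw [← hd, zero_div]
    exact lowerProfile_nonneg hs.le hne hE
  · have hc : 0 ≤ 1 / s - 1 / t := sub_nonneg.mpr (one_div_le_one_div_of_le hs hst)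
    have hcont : ContinuousWithinAt (fun e => e / (1 + (1 / s - 1 / t) * e)) (Iio d) d :=
      (continuousAt_id.div (continuousAt_const.add (continuousAt_const.mul continuousAt_id))
        (add_pos_of_pos_of_nonneg one_pos (mul_nonneg hc hd0)).ne').continuousWithinAt
    refine le_of_tendsto hcont.tendsto ?_
    filter_upwards [Ioo_mem_nhdsLT hd] with e he using
      div_le_lowerProfile hs hst hne hE he.1.le he.2

theorem stmt_17 (n : ℕ) (hn : 1 ≤ n)
    (E : Set (EuclideanSpace ℝ (Fin n))) (hne : E.Nonempty) (hE : Bornology.IsBounded E)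
    (s t : ℝ) (hs : 0 < s) (hst : s ≤ t) :
    lowerProfile n t E / (1 + (1 / s - 1 / t) * lowerProfile n t E) ≤ lowerProfile n s E ∧
      lowerProfile n s E ≤ s :=
  stmt_17_general n E hne hE s t hs hst
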